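/- If H(T|X) = 0 and H(T|Y) = 0 (T is a deterministic function of X and also of Y), then the Williams–Beer PID satisfies R = I(T;X) = I(T;Y) = H(T) and U_X = U_Y = S = 0. -/

import Mathlib

open scoped BigOperators
noncomputable section

variable {𝕋 𝕏 𝕐 : Type} [Fintype 𝕋] [Fintype 𝕏] [Fintype 𝕐]

/-- marginal of the target -/
def margT (p : 𝕋 → 𝕏 → 𝕐 → ℝ) (t : 𝕋) : ℝ := ∑ x, ∑ y, p t x y
def margX (p : 𝕋 → 𝕏 → 𝕐 → ℝ) (x : 𝕏) : ℝ := ∑ t, ∑ y, p t x y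
def margY (p : 𝕋 → 𝕏 → 𝕐 → ℝ) (y : 𝕐) : ℝ := ∑ t, ∑ x, p t x y
def margTX (p : 𝕋 → 𝕏 → 𝕐 → ℝ) (t : 𝕋) (x : 𝕏) : ℝ := ∑ y, p t x y
def margTY (p : 𝕋 → 𝕏 → 𝕐 → ℝ) (t : 𝕋) (y : 𝕐) : ℝ := ∑ x, p t x y
def margXY (p : 𝕋 → 𝕏 → 𝕐 → ℝ) (x : 𝕏) (y : 𝕐) : ℝ := ∑ t, p t x y

/-- mutual information I(T;X) (base-2 logs) -/
def miTX (p : 𝕋 → 𝕏 → 𝕐 → ℝ) : ℝ :=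
  ∑ t, ∑ x, margTX p t x * Real.logb 2 (margTX p t x / (margT p t * margX p x))
/-- mutual information I(T;Y) -/
def miTY (p : 𝕋 → 𝕏 → 𝕐 → ℝ) : ℝ :=
  ∑ t, ∑ y, margTY p t y * Real.logb 2 (margTY p t y / (margT p t * margY p y))
/-- joint mutual information I(T;X,Y) -/
def miTXY (p : 𝕋 → 𝕏 → 𝕐 → ℝ) : ℝ :=
  ∑ t, ∑ x, ∑ y, p t x y * Real.logb 2 (p t x y / (margT p t * margXY p x y))

/-- specific information I_spec(t;X) = D_KL(p(X|t) ‖ p(X)) -/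
def IspecX (p : 𝕋 → 𝕏 → 𝕐 → ℝ) (t : 𝕋) : ℝ :=
  ∑ x, (margTX p t x / margT p t) * Real.logb 2 ((margTX p t x / margT p t) / margX p x)
def IspecY (p : 𝕋 → 𝕏 → 𝕐 → ℝ) (t : 𝕋) : ℝ :=
  ∑ y, (margTY p t y / margT p t) * Real.logb 2 ((margTY p t y / margT p t) / margY p y)

/-- Williams–Beer redundancy -/
def red (p : 𝕋 → 𝕏 → 𝕐 → ℝ) : ℝ := ∑ t, margT p t * min (IspecX p t) (IspecY p t)

/-- `p` is a probability distribution -/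
def IsDist (p : 𝕋 → 𝕏 → 𝕐 → ℝ) : Prop :=
  (∀ t x y, 0 ≤ p t x y) ∧ (∑ t, ∑ x, ∑ y, p t x y) = 1

/-- conditional entropy H(T|X) (base-2 logs) -/
def condEntTX (p : 𝕋 → 𝕏 → 𝕐 → ℝ) : ℝ :=
  -∑ t, ∑ x, margTX p t x * Real.logb 2 (margTX p t x / margX p x)
/-- conditional entropy H(T|Y) -/
def condEntTY (p : 𝕋 → 𝕏 → 𝕐 → ℝ) : ℝ :=
  -∑ t, ∑ y, margTY p t y * Real.logb 2 (margTY p t y / margY p y)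
/-- entropy H(T) -/
def entT (p : 𝕋 → 𝕏 → 𝕐 → ℝ) : ℝ := -∑ t, margT p t * Real.logb 2 (margT p t)

/- Both conditional entropies vanish, so every `t` with `p(t,x) > 0` carries all of the mass
of `x` (and likewise of `y`). Then `p(x|t) / p(x) = 1 / p(t)` on the support, so each
specific information `I_spec(t;X)`, `I_spec(t;Y)` equals `-log p(t)`, and the same collapse
turns `I(T;X)`, `I(T;Y)`, `I(T;X,Y)` and `R` into `H(T)`. The `Y`-statements are the
`X`-statements for the distribution with the two sources swapped. -/

section Collapse

variable {α β : Type*} [Fintype α] [Fintype β]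

lemma mul_logb_div_neg {a b : ℝ} (ha : 0 < a) (hab : a < b) :
    a * Real.logb 2 (a / b) < 0 :=
  mul_neg_of_pos_of_neg ha
    (Real.logb_neg one_lt_two (div_pos ha (ha.trans hab)) ((div_lt_one (ha.trans hab)).2 hab))

lemma mul_logb_div_nonpos {a b : ℝ} (ha : 0 ≤ a) (hab : a ≤ b) :
    a * Real.logb 2 (a / b) ≤ 0 :=
  mul_nonpos_of_nonneg_of_nonpos ha
    (Real.logb_nonpos one_lt_two (div_nonneg ha (ha.trans hab)) (div_le_one_of_le₀ hab (ha.trans hab)))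

lemma eq_zero_or_eq_sum_of_sum_mul_logb_eq_zero (q : α → β → ℝ) (hq : ∀ a b, 0 ≤ q a b)
    (h : ∑ a, ∑ b, q a b * Real.logb 2 (q a b / ∑ a', q a' b) = 0) (a : α) (b : β) :
    q a b = 0 ∨ q a b = ∑ a', q a' b := by
  have hle : ∀ a b, q a b ≤ ∑ a', q a' b := fun a b =>
    Finset.single_le_sum (fun a' _ => hq a' b) (Finset.mem_univ a)
  have hterm : ∀ a b, q a b * Real.logb 2 (q a b / ∑ a', q a' b) ≤ 0 := fun a b =>
    mul_logb_div_nonpos (hq a b) (hle a b)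
  have hrow := (Finset.sum_eq_zero_iff_of_nonpos fun a _ =>
    Finset.sum_nonpos fun b _ => hterm a b).1 h a (Finset.mem_univ a)
  have hab := (Finset.sum_eq_zero_iff_of_nonpos fun b _ => hterm a b).1 hrow b (Finset.mem_univ b)
  by_contra! hne
  exact (mul_logb_div_neg ((hq a b).lt_of_ne' hne.1) ((hle a b).lt_of_ne hne.2)).ne hab

lemma eq_zero_or_eq_sum_of_rowSum (r : α → β → ℝ) (hr : ∀ a b, 0 ≤ r a b) {a : α}
    (h : ∑ b, r a b = 0 ∨ ∑ b, r a b = ∑ a', ∑ b, r a' b) (b : β) :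
    r a b = 0 ∨ r a b = ∑ a', r a' b := by
  rcases h with hzero | htotal
  · exact .inl ((Finset.sum_eq_zero_iff_of_nonneg fun b _ => hr a b).1 hzero b (Finset.mem_univ b))
  · right
    classical
    have hcol := Finset.add_sum_erase Finset.univ (fun a' => r a' b) (Finset.mem_univ a)
    have hrows := Finset.add_sum_erase Finset.univ (fun a' => ∑ b, r a' b) (Finset.mem_univ a)
    have hrest_nonneg : 0 ≤ ∑ a' ∈ Finset.univ.erase a, r a' b :=
      Finset.sum_nonneg fun a' _ => hr a' b
    have hrest_le : ∑ a' ∈ Finset.univ.erase a, r a' b ≤ ∑ a' ∈ Finset.univ.erase a, ∑ b, r a' b :=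
      Finset.sum_le_sum fun a' _ => Finset.single_le_sum (fun b _ => hr a' b) (Finset.mem_univ b)
    linarith

lemma mul_logb_div_mul_eq_of_eq_zero_or_eq {a b : ℝ} (c : ℝ) (h : a = 0 ∨ a = b) :
    a * Real.logb 2 (a / (c * b)) = -(a * Real.logb 2 c) := by
  obtain rfl | rfl := h
  · simp
  · rcases eq_or_ne a 0 with rfl | ha
    · simp
    · rw [div_mul_cancel_right₀ ha, Real.logb_inv]
      ring

end Collapse

section Marginals

variable (p : 𝕋 → 𝕏 → 𝕐 → ℝ)

omit [Fintype 𝕋] in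
lemma margT_nonneg (hp : ∀ t x y, 0 ≤ p t x y) (t : 𝕋) : 0 ≤ margT p t :=
  Finset.sum_nonneg fun x _ => Finset.sum_nonneg fun y _ => hp t x y

omit [Fintype 𝕋] [Fintype 𝕏] in
lemma margTX_nonneg (hp : ∀ t x y, 0 ≤ p t x y) (t : 𝕋) (x : 𝕏) : 0 ≤ margTX p t x :=
  Finset.sum_nonneg fun y _ => hp t x y

lemma margTX_eq_zero_or_eq_margX (hp : ∀ t x y, 0 ≤ p t x y) (hX : condEntTX p = 0)
    (t : 𝕋) (x : 𝕏) : margTX p t x = 0 ∨ margTX p t x = margX p x :=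
  eq_zero_or_eq_sum_of_sum_mul_logb_eq_zero (margTX p) (margTX_nonneg p hp) (neg_eq_zero.1 hX) t x

lemma eq_zero_or_eq_margXY (hp : ∀ t x y, 0 ≤ p t x y) (hX : condEntTX p = 0)
    (t : 𝕋) (x : 𝕏) (y : 𝕐) : p t x y = 0 ∨ p t x y = margXY p x y :=
  eq_zero_or_eq_sum_of_rowSum (fun t y => p t x y) (fun t y => hp t x y)
    (margTX_eq_zero_or_eq_margX p hp hX t x) y

/-- For `p(t) = 0` both sides vanish, the right one because `x / 0 = 0` and `logb 2 0 = 0`. -/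
lemma margT_mul_IspecX (t : 𝕋) :
    margT p t * IspecX p t =
      ∑ x, margTX p t x * Real.logb 2 (margTX p t x / (margT p t * margX p x)) := by
  rcases eq_or_ne (margT p t) 0 with hT | hT
  · simp [hT]
  · rw [IspecX, Finset.mul_sum]
    refine Finset.sum_congr rfl fun x _ => ?_
    rw [div_div]
    field_simp

end Marginals

section Deterministic

variable {p : 𝕋 → 𝕏 → 𝕐 → ℝ} (hp : ∀ t x y, 0 ≤ p t x y) (hX : condEntTX p = 0)
include hp hX

lemma sum_margTX_mul_logb_of_condEntTX_eq_zero (t : 𝕋) :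
    ∑ x, margTX p t x * Real.logb 2 (margTX p t x / (margT p t * margX p x)) =
      -(margT p t * Real.logb 2 (margT p t)) := by
  simp only [fun x => mul_logb_div_mul_eq_of_eq_zero_or_eq (margT p t)
    (margTX_eq_zero_or_eq_margX p hp hX t x), Finset.sum_neg_distrib, ← Finset.sum_mul]
  rfl

lemma margT_mul_IspecX_of_condEntTX_eq_zero (t : 𝕋) :
    margT p t * IspecX p t = -(margT p t * Real.logb 2 (margT p t)) := by
  rw [margT_mul_IspecX, sum_margTX_mul_logb_of_condEntTX_eq_zero hp hX]

lemma miTX_eq_entT_of_condEntTX_eq_zero : miTX p = entT p := by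
  rw [miTX, entT, ← Finset.sum_neg_distrib]
  exact Finset.sum_congr rfl fun t _ => sum_margTX_mul_logb_of_condEntTX_eq_zero hp hX t

lemma miTXY_eq_entT_of_condEntTX_eq_zero : miTXY p = entT p := by
  rw [miTXY, entT, ← Finset.sum_neg_distrib]
  refine Finset.sum_congr rfl fun t _ => ?_
  simp only [fun x y => mul_logb_div_mul_eq_of_eq_zero_or_eq (margT p t)
    (eq_zero_or_eq_margXY p hp hX t x y), Finset.sum_neg_distrib, ← Finset.sum_mul]
  rfl

end Deterministic

section Swap

def swapSources (p : 𝕋 → 𝕏 → 𝕐 → ℝ) : 𝕋 → 𝕐 → 𝕏 → ℝ := fun t y x => p t x y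

variable (p : 𝕋 → 𝕏 → 𝕐 → ℝ)

omit [Fintype 𝕋] in
lemma margT_swapSources : margT (swapSources p) = margT p :=
  funext fun _ => Finset.sum_comm

lemma entT_swapSources : entT (swapSources p) = entT p := by
  rw [entT, entT, margT_swapSources]

lemma condEntTX_swapSources : condEntTX (swapSources p) = condEntTY p := rfl

lemma miTX_swapSources : miTX (swapSources p) = miTY p := by
  rw [miTX, miTY, margT_swapSources]
  rfl

lemma IspecX_swapSources : IspecX (swapSources p) = IspecY p := by
  funext t
  rw [IspecX, IspecY, margT_swapSources]
  rfl

variable {p} (hp : ∀ t x y, 0 ≤ p t x y)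
include hp

lemma miTY_eq_entT_of_condEntTY_eq_zero (hY : condEntTY p = 0) : miTY p = entT p := by
  rw [← miTX_swapSources, ← entT_swapSources]
  exact miTX_eq_entT_of_condEntTX_eq_zero (fun t y x => hp t x y)
    ((condEntTX_swapSources p).trans hY)

lemma margT_mul_IspecY_of_condEntTY_eq_zero (hY : condEntTY p = 0) (t : 𝕋) :
    margT p t * IspecY p t = -(margT p t * Real.logb 2 (margT p t)) := by
  rw [← IspecX_swapSources, ← margT_swapSources]
  exact margT_mul_IspecX_of_condEntTX_eq_zero (fun t y x => hp t x y)
    ((condEntTX_swapSources p).trans hY) t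

end Swap

lemma red_eq_entT {p : 𝕋 → 𝕏 → 𝕐 → ℝ} (hp : ∀ t x y, 0 ≤ p t x y) (hX : condEntTX p = 0)
    (hY : condEntTY p = 0) : red p = entT p := by
  rw [red, entT, ← Finset.sum_neg_distrib]
  refine Finset.sum_congr rfl fun t _ => ?_
  rw [mul_min_of_nonneg _ _ (margT_nonneg p hp t), margT_mul_IspecX_of_condEntTX_eq_zero hp hX,
    margT_mul_IspecY_of_condEntTY_eq_zero hp hY, min_self]

theorem deterministic_source_redundancy (p : 𝕋 → 𝕏 → 𝕐 → ℝ) (hp : IsDist p)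
    (hX : condEntTX p = 0) (hY : condEntTY p = 0) :
    red p = miTX p ∧ miTX p = miTY p ∧ miTY p = entT p ∧
    miTX p - red p = 0 ∧ miTY p - red p = 0 ∧
    miTXY p - miTX p - miTY p + red p = 0 := by
  obtain ⟨hp, -⟩ := hp
  have hTX := miTX_eq_entT_of_condEntTX_eq_zero hp hX
  have hTY := miTY_eq_entT_of_condEntTY_eq_zero hp hY
  have hTXY := miTXY_eq_entT_of_condEntTX_eq_zero hp hX
  have hR := red_eq_entT hp hX hY
  refine ⟨?_, ?_, ?_, ?_, ?_, ?_⟩ <;> linarith
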